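/- There exists a positive absolute constant c₀ such that the following holds. Suppose Z̃ = [X̃; Ỹ] ∈ ℝ^{(n₁+n₂)×r} is aligned with Z⋆, i.e., the identity matrix I_r is a minimizer of ‖X̃P − X⋆‖_F² + ‖ỸP⁻ᵀ − Y⋆‖_F² over invertible P ∈ ℝ^{r×r}. Set Ẽ_x = X̃ − X⋆ and Ẽ_y = Ỹ − Y⋆, and assume ‖Ẽ_x‖_F² + ‖Ẽ_y‖_F² ≤ c₀² σ_min/κ³. Let Λ ∈ ℝ^{r×r} be invertible with ‖Λ − I_r‖ ≤ 1/(180√κ) and ‖Λ⁻¹ − I_r‖ ≤ 1/(180√κ). Then ⟨Ẽ_x, (X̃Ỹᵀ − M⋆)ỸΛ⟩ + ⟨Ẽ_y, (X̃Ỹᵀ − M⋆)ᵀX̃Λ⁻¹⟩ ≥ ¾·(‖Ỹ Ẽ_xᵀ‖_F² + ‖X̃ Ẽ_yᵀ‖_F²) − (σ_min/7)·(‖Ẽ_x‖_F² + ‖Ẽ_y‖_F²). -/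

import Mathlib

open Matrix BigOperators

/-- Frobenius norm of a real matrix. -/
noncomputable def frobNorm {m n : ℕ} (A : Matrix (Fin m) (Fin n) ℝ) : ℝ :=
  Real.sqrt (∑ i, ∑ j, (A i j) ^ 2)

/-- Spectral norm (largest singular value) of a real matrix. -/
noncomputable def specNorm {m n : ℕ} (A : Matrix (Fin m) (Fin n) ℝ) : ℝ :=
  ‖LinearMap.toContinuousLinearMap (Matrix.toEuclideanLin A)‖

/-- Smallest singular value of a matrix with `r` columns (the `r`-th largest singular value). -/
noncomputable def sigmaMinCol {m r : ℕ} (A : Matrix (Fin m) (Fin r) ℝ) : ℝ :=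
  sInf { s | ∃ v : EuclideanSpace ℝ (Fin r), ‖v‖ = 1 ∧ s = ‖Matrix.toEuclideanLin A v‖ }

/-- Matrix inner product `⟨A, B⟩ = Tr(Bᵀ A)`. -/
noncomputable def matInner {m n : ℕ} (A B : Matrix (Fin m) (Fin n) ℝ) : ℝ :=
  Matrix.trace (Bᵀ * A)

/-- Euclidean norm on `ℝ^m`. -/
noncomputable def vec2Norm {m : ℕ} (y : Fin m → ℝ) : ℝ :=
  Real.sqrt (∑ i, (y i) ^ 2)

/-- The sensing operator `𝒜(M) = (⟨A_i, M⟩)_{i=1..m}`. -/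
noncomputable def senseOp {n₁ n₂ m : ℕ} (As : Fin m → Matrix (Fin n₁) (Fin n₂) ℝ)
    (M : Matrix (Fin n₁) (Fin n₂) ℝ) : Fin m → ℝ :=
  fun i => matInner (As i) M

/-- The adjoint operator `𝒜*(y) = ∑ i, y i • A i`. -/
noncomputable def senseAdj {n₁ n₂ m : ℕ} (As : Fin m → Matrix (Fin n₁) (Fin n₂) ℝ)
    (y : Fin m → ℝ) : Matrix (Fin n₁) (Fin n₂) ℝ :=
  ∑ i, y i • As i

/-- Rank-`k` restricted isometry property with constant `δ`. -/
def HasRIP {n₁ n₂ m : ℕ} (As : Fin m → Matrix (Fin n₁) (Fin n₂) ℝ) (k : ℕ) (δ : ℝ) : Prop :=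
  0 ≤ δ ∧ δ < 1 ∧
  ∀ M : Matrix (Fin n₁) (Fin n₂) ℝ, M.rank ≤ k →
    (1 - δ) * (frobNorm M) ^ 2 ≤ (vec2Norm (senseOp As M)) ^ 2 ∧
    (vec2Norm (senseOp As M)) ^ 2 ≤ (1 + δ) * (frobNorm M) ^ 2

/-- dist(Z, Z⋆): infimum over invertible `P` of
`sqrt(‖XP − X⋆‖_F² + ‖YP⁻ᵀ − Y⋆‖_F²)`. -/
noncomputable def distZ {n₁ n₂ r : ℕ} (X Xs : Matrix (Fin n₁) (Fin r) ℝ)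
    (Y Ys : Matrix (Fin n₂) (Fin r) ℝ) : ℝ :=
  sInf { v | ∃ P : Matrix (Fin r) (Fin r) ℝ, IsUnit P ∧
    v = Real.sqrt ((frobNorm (X * P - Xs)) ^ 2 + (frobNorm (Y * (P⁻¹)ᵀ - Ys)) ^ 2) }

/-!
Write `Eₓ = X̃ - X⋆`, `E_y = Ỹ - Y⋆` and `W = EₓỸᵀ + X̃E_yᵀ`, so that `X̃Ỹᵀ - M⋆ = W - EₓE_yᵀ`.
Replacing `Λ` and `Λ⁻¹` by the identity turns the left-hand side into
`⟨W, W - EₓE_yᵀ⟩`, at a cost of order `‖Λ - 1‖ ‖Ỹ‖ ≲ √σ_min` times the errors.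
Alignment makes the first variation of `P ↦ ‖X̃P - X⋆‖² + ‖ỸP⁻ᵀ - Y⋆‖²` at `P = 1` vanish,
which says `X̃ᵀEₓ = E_yᵀỸ`; hence the cross term `⟨EₓỸᵀ, X̃E_yᵀ⟩ = ‖ỸᵀE_y‖²` is nonnegative and
`‖W‖² ≥ ‖ỸEₓᵀ‖² + ‖X̃E_yᵀ‖²`. All remaining terms are of third order in the errors and are
absorbed by AM-GM, since `c₀ = 1/100` and `κ ≥ 1` give `‖Eₓ‖, ‖E_y‖ ≤ √σ_min / 100`.
-/

open Filter Topology

section Frobenius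

variable {m n k : ℕ}

noncomputable def mvec (A : Matrix (Fin m) (Fin n) ℝ) : EuclideanSpace ℝ (Fin m × Fin n) :=
  WithLp.toLp 2 fun p => A p.1 p.2

lemma mvec_add (A B : Matrix (Fin m) (Fin n) ℝ) : mvec (A + B) = mvec A + mvec B := rfl

lemma mvec_sub (A B : Matrix (Fin m) (Fin n) ℝ) : mvec (A - B) = mvec A - mvec B := rfl

lemma mvec_smul (t : ℝ) (A : Matrix (Fin m) (Fin n) ℝ) : mvec (t • A) = t • mvec A := rfl

lemma mvec_injective : Function.Injective (mvec (m := m) (n := n)) := fun A B h => by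
  ext i j
  exact congrArg (fun v : EuclideanSpace ℝ (Fin m × Fin n) => v (i, j)) h

lemma frobNorm_eq_norm_mvec (A : Matrix (Fin m) (Fin n) ℝ) : frobNorm A = ‖mvec A‖ := by
  simp [frobNorm, EuclideanSpace.norm_eq, mvec, Fintype.sum_prod_type]

lemma matInner_eq_inner_mvec (A B : Matrix (Fin m) (Fin n) ℝ) :
    matInner A B = inner ℝ (mvec A) (mvec B) := by
  simp only [matInner, Matrix.trace, Matrix.diag, Matrix.mul_apply, Matrix.transpose_apply,
    PiLp.inner_apply, mvec, Fintype.sum_prod_type, RCLike.inner_apply, conj_trivial]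
  rw [Finset.sum_comm]

lemma frobNorm_nonneg (A : Matrix (Fin m) (Fin n) ℝ) : 0 ≤ frobNorm A :=
  Real.sqrt_nonneg _

lemma frobNorm_add_le (A B : Matrix (Fin m) (Fin n) ℝ) :
    frobNorm (A + B) ≤ frobNorm A + frobNorm B := by
  simpa only [frobNorm_eq_norm_mvec, mvec_add] using norm_add_le (mvec A) (mvec B)

lemma frobNorm_sub_le (A B : Matrix (Fin m) (Fin n) ℝ) :
    frobNorm (A - B) ≤ frobNorm A + frobNorm B := by
  simpa only [frobNorm_eq_norm_mvec, mvec_sub] using norm_sub_le (mvec A) (mvec B)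

lemma frobNorm_transpose (A : Matrix (Fin m) (Fin n) ℝ) : frobNorm Aᵀ = frobNorm A := by
  rw [frobNorm, frobNorm, Finset.sum_comm]
  rfl

lemma continuous_frobNorm : Continuous (frobNorm (m := m) (n := n)) := by
  unfold frobNorm
  fun_prop

lemma matInner_self (A : Matrix (Fin m) (Fin n) ℝ) : matInner A A = frobNorm A ^ 2 := by
  rw [matInner_eq_inner_mvec, frobNorm_eq_norm_mvec, real_inner_self_eq_norm_sq]

lemma eq_zero_of_matInner_self_eq_zero {A : Matrix (Fin m) (Fin n) ℝ} (h : matInner A A = 0) :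
    A = 0 :=
  mvec_injective (by rwa [matInner_eq_inner_mvec, inner_self_eq_zero] at h)

lemma abs_matInner_le (A B : Matrix (Fin m) (Fin n) ℝ) :
    |matInner A B| ≤ frobNorm A * frobNorm B := by
  simpa only [matInner_eq_inner_mvec, frobNorm_eq_norm_mvec] using abs_real_inner_le_norm _ _

lemma frobNorm_add_smul_sq (A B : Matrix (Fin m) (Fin n) ℝ) (t : ℝ) :
    frobNorm (A + t • B) ^ 2 =
      frobNorm A ^ 2 + 2 * t * matInner A B + t ^ 2 * frobNorm B ^ 2 := by
  simp only [frobNorm_eq_norm_mvec, matInner_eq_inner_mvec, mvec_add, mvec_smul,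
    norm_add_sq_real, real_inner_smul_right, norm_smul, mul_pow, Real.norm_eq_abs, sq_abs]
  ring

lemma matInner_comm (A B : Matrix (Fin m) (Fin n) ℝ) : matInner A B = matInner B A := by
  rw [matInner_eq_inner_mvec, matInner_eq_inner_mvec, real_inner_comm]

lemma matInner_add_left (A B C : Matrix (Fin m) (Fin n) ℝ) :
    matInner (A + B) C = matInner A C + matInner B C := by
  simp only [matInner_eq_inner_mvec, mvec_add, inner_add_left]

lemma matInner_sub_left (A B C : Matrix (Fin m) (Fin n) ℝ) :
    matInner (A - B) C = matInner A C - matInner B C := by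
  simp only [matInner_eq_inner_mvec, mvec_sub, inner_sub_left]

lemma matInner_sub_right (A B C : Matrix (Fin m) (Fin n) ℝ) :
    matInner A (B - C) = matInner A B - matInner A C := by
  simp only [matInner_eq_inner_mvec, mvec_sub, inner_sub_right]

lemma matInner_transpose (A B : Matrix (Fin m) (Fin n) ℝ) : matInner Aᵀ Bᵀ = matInner A B := by
  rw [matInner_comm, matInner, matInner, transpose_transpose, trace_mul_comm]

lemma matInner_mul_right (A : Matrix (Fin m) (Fin n) ℝ) (B : Matrix (Fin m) (Fin k) ℝ)
    (C : Matrix (Fin k) (Fin n) ℝ) : matInner A (B * C) = matInner (A * Cᵀ) B := by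
  rw [matInner, matInner, transpose_mul, Matrix.mul_assoc, trace_mul_comm, Matrix.mul_assoc]

lemma matInner_mul_left (A : Matrix (Fin m) (Fin n) ℝ) (B : Matrix (Fin m) (Fin k) ℝ)
    (C : Matrix (Fin k) (Fin n) ℝ) : matInner (B * C) A = matInner C (Bᵀ * A) := by
  rw [matInner, matInner, transpose_mul, transpose_transpose, Matrix.mul_assoc]

lemma continuous_matInner_left (B : Matrix (Fin m) (Fin n) ℝ) :
    Continuous fun A : Matrix (Fin m) (Fin n) ℝ => matInner A B :=
  (continuous_const.matrix_mul continuous_id).matrix_trace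

end Frobenius

lemma matInner_mul_transpose_nonneg {n₁ n₂ r : ℕ} {Ex Xt : Matrix (Fin n₁) (Fin r) ℝ}
    {Ey Yt : Matrix (Fin n₂) (Fin r) ℝ} (h : Xtᵀ * Ex = Eyᵀ * Yt) :
    0 ≤ matInner (Ex * Ytᵀ) (Xt * Eyᵀ) := by
  rw [matInner_mul_right, transpose_transpose, Matrix.mul_assoc, matInner_mul_left,
    ← transpose_transpose Xt, ← transpose_mul, h, transpose_mul, transpose_transpose,
    matInner_self]
  positivity

lemma matInner_add_sub_ge {m n : ℕ} (A B N : Matrix (Fin m) (Fin n) ℝ) (h : 0 ≤ matInner A B) :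
    frobNorm A ^ 2 + frobNorm B ^ 2 - (frobNorm A + frobNorm B) * frobNorm N ≤
      matInner (A + B) (A + B - N) := by
  have hN : matInner (A + B) N ≤ (frobNorm A + frobNorm B) * frobNorm N :=
    (le_abs_self _).trans <| (abs_matInner_le _ _).trans <|
      mul_le_mul_of_nonneg_right (frobNorm_add_le A B) (frobNorm_nonneg N)
  have hsq : frobNorm (A + B) ^ 2 = frobNorm A ^ 2 + 2 * matInner A B + frobNorm B ^ 2 := by
    simpa using frobNorm_add_smul_sq A B 1
  rw [matInner_sub_right, matInner_self, hsq]
  linarith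

lemma mul_diagonal_mul_transpose_eq {n₁ n₂ r : ℕ} (U : Matrix (Fin n₁) (Fin r) ℝ)
    (V : Matrix (Fin n₂) (Fin r) ℝ) {d : Fin r → ℝ} (hd : ∀ i, 0 ≤ d i) :
    U * diagonal d * Vᵀ =
      U * diagonal (fun i => √(d i)) * (V * diagonal (fun i => √(d i)))ᵀ := by
  rw [transpose_mul, diagonal_transpose, ← Matrix.mul_assoc (U * _),
    Matrix.mul_assoc U (diagonal fun i => √(d i)),
    diagonal_mul_diagonal]
  congr
  ext i
  exact (Real.mul_self_sqrt (hd i)).symm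

lemma eq_zero_of_eventually_nonneg_mul {G : ℝ → ℝ} (hG : ContinuousAt G 0)
    (h : ∀ᶠ t in 𝓝 0, 0 ≤ t * G t) : G 0 = 0 := by
  refine le_antisymm (le_of_tendsto (hG.mono_left (nhdsWithin_le_nhds (s := Set.Iio 0))) ?_)
    (ge_of_tendsto (hG.mono_left (nhdsWithin_le_nhds (s := Set.Ioi 0))) ?_)
  · filter_upwards [nhdsWithin_le_nhds h, self_mem_nhdsWithin] with t ht (htneg : t < 0)
    nlinarith
  · filter_upwards [nhdsWithin_le_nhds h, self_mem_nhdsWithin] with t ht (htpos : 0 < t)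
    nlinarith

section Alignment

variable {n₁ n₂ r : ℕ}

lemma eventually_isUnit_one_add_smul (A : Matrix (Fin r) (Fin r) ℝ) :
    ∀ᶠ t in 𝓝 (0 : ℝ), IsUnit (1 + t • A) := by
  have hdet : ContinuousAt (fun t : ℝ => (1 + t • A).det) 0 := by fun_prop
  filter_upwards [hdet.eventually_ne (by simp : (1 + (0 : ℝ) • A).det ≠ 0)] with t ht
  exact (isUnit_iff_isUnit_det _).mpr (isUnit_iff_ne_zero.mpr ht)

lemma continuousAt_inv_one_add_smul (A : Matrix (Fin r) (Fin r) ℝ) :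
    ContinuousAt (fun t : ℝ => (1 + t • A)⁻¹) 0 := by
  refine ContinuousAt.comp (f := fun t : ℝ => 1 + t • A) ?_ (by fun_prop)
  refine continuousAt_matrix_inv _ ?_
  simp [Ring.inverse_eq_inv']

lemma inv_one_add_smul_eq {A : Matrix (Fin r) (Fin r) ℝ} {t : ℝ} (h : IsUnit (1 + t • A)) :
    (1 + t • A)⁻¹ = 1 - t • (A * (1 + t • A)⁻¹) := by
  have := mul_nonsing_inv _ ((isUnit_iff_isUnit_det _).mp h)
  rw [Matrix.add_mul, Matrix.one_mul, smul_mul_assoc] at this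
  exact eq_sub_of_add_eq this

def IsAligned (Xt Xs : Matrix (Fin n₁) (Fin r) ℝ) (Yt Ys : Matrix (Fin n₂) (Fin r) ℝ) : Prop :=
  ∀ P : Matrix (Fin r) (Fin r) ℝ, IsUnit P →
    frobNorm (Xt - Xs) ^ 2 + frobNorm (Yt - Ys) ^ 2 ≤
      frobNorm (Xt * P - Xs) ^ 2 + frobNorm (Yt * (P⁻¹)ᵀ - Ys) ^ 2

variable {Xt Xs : Matrix (Fin n₁) (Fin r) ℝ} {Yt Ys : Matrix (Fin n₂) (Fin r) ℝ}

lemma IsAligned.matInner_mul_eq (h : IsAligned Xt Xs Yt Ys) (A : Matrix (Fin r) (Fin r) ℝ) :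
    matInner (Xt - Xs) (Xt * A) = matInner (Yt - Ys) (Yt * Aᵀ) := by
  set Z : ℝ → Matrix (Fin n₂) (Fin r) ℝ := fun t => Yt * (A * (1 + t • A)⁻¹)ᵀ with hZ
  set G : ℝ → ℝ := fun t => 2 * matInner (Xt - Xs) (Xt * A) - 2 * matInner (Z t) (Yt - Ys) +
    t * (frobNorm (Xt * A) ^ 2 + frobNorm (Z t) ^ 2) with hG
  have hZcont : ContinuousAt Z 0 :=
    (continuous_const.matrix_mul (continuous_const.matrix_mul continuous_id).matrix_transpose
      ).continuousAt.comp (continuousAt_inv_one_add_smul A)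
  have hGcont : ContinuousAt G 0 := by
    have := (continuous_matInner_left (Yt - Ys)).continuousAt.comp hZcont
    have := continuous_frobNorm.continuousAt.comp hZcont
    fun_prop
  -- `f (1 + tA) - f 1 = t * G t`, where `f` is the objective minimised at `1`.
  have hmin : ∀ᶠ t in 𝓝 0, 0 ≤ t * G t := by
    filter_upwards [eventually_isUnit_one_add_smul A] with t ht
    have hX : Xt * (1 + t • A) - Xs = (Xt - Xs) + t • (Xt * A) := by
      rw [Matrix.mul_add, Matrix.mul_one, Matrix.mul_smul]; abel
    have hY : Yt * ((1 + t • A)⁻¹)ᵀ - Ys = (Yt - Ys) + (-t) • Z t := by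
      rw [inv_one_add_smul_eq ht, transpose_sub, transpose_one, transpose_smul, Matrix.mul_sub,
        Matrix.mul_one, Matrix.mul_smul, neg_smul]; abel
    have := h _ ht
    rw [hX, hY, frobNorm_add_smul_sq, frobNorm_add_smul_sq, matInner_comm (Yt - Ys)] at this
    simp only [hG]
    linarith
  have hG0 := eq_zero_of_eventually_nonneg_mul hGcont hmin
  simp only [hG, hZ, zero_smul, add_zero, inv_one, Matrix.mul_one, zero_mul] at hG0
  rw [matInner_comm (Yt * Aᵀ)] at hG0
  linarith

lemma IsAligned.transpose_mul_sub_eq (h : IsAligned Xt Xs Yt Ys) :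
    Xtᵀ * (Xt - Xs) = (Yt - Ys)ᵀ * Yt := by
  refine sub_eq_zero.mp (eq_zero_of_matInner_self_eq_zero ?_)
  rw [matInner_sub_left, matInner_mul_left, transpose_transpose, h.matInner_mul_eq,
    ← matInner_transpose ((Yt - Ys)ᵀ * Yt), transpose_mul, matInner_mul_left,
    transpose_transpose, transpose_transpose, sub_self]

end Alignment

lemma gamma_scalar_bound {a b ex ey nn dF s : ℝ} (ha : 0 ≤ a) (hb : 0 ≤ b) (hex : 0 ≤ ex)
    (hey : 0 ≤ ey) (hex' : ex ≤ s / 100) (hey' : ey ≤ s / 100) (hnn : nn ≤ ex * ey)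
    (hdF : dF ≤ a + b + nn) :
    3 / 4 * (a ^ 2 + b ^ 2) - s ^ 2 / 7 * (ex ^ 2 + ey ^ 2) ≤
      a ^ 2 + b ^ 2 - (a + b) * nn - s / 170 * (ex + ey) * dF := by
  have hs : 0 ≤ s := by linarith
  have hexey : ex * ey ≤ s / 200 * (ex + ey) := by nlinarith
  have h1 : (a + b) * nn ≤ (a + b) * (s / 200 * (ex + ey)) :=
    mul_le_mul_of_nonneg_left (hnn.trans hexey) (by positivity)
  have h2 : s / 170 * (ex + ey) * dF ≤ s / 170 * (ex + ey) * (a + b + s / 200 * (ex + ey)) :=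
    mul_le_mul_of_nonneg_left (by linarith) (by positivity)
  nlinarith [sq_nonneg (a - b), sq_nonneg (ex - ey), sq_nonneg (a + b - s * (ex + ey) / 20)]

lemma le_of_sq_add_sq_le {a b c : ℝ} (ha : 0 ≤ a) (hc : 0 ≤ c) (h : a ^ 2 + b ^ 2 ≤ c ^ 2) :
    a ≤ c :=
  (pow_le_pow_iff_left₀ ha hc two_ne_zero).mp (by linarith [sq_nonneg b])

section OperatorNorm

open scoped Matrix.Norms.L2Operator

variable {m n k r n₁ n₂ : ℕ}

lemma l2_opNorm_transpose (A : Matrix (Fin m) (Fin n) ℝ) : ‖Aᵀ‖ = ‖A‖ := by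
  simpa [conjTranspose_eq_transpose_of_trivial] using l2_opNorm_conjTranspose A

lemma frobNorm_sq_eq_sum_col (A : Matrix (Fin m) (Fin n) ℝ) :
    frobNorm A ^ 2 = ∑ j, ‖(WithLp.toLp 2 fun i => A i j : EuclideanSpace ℝ (Fin m))‖ ^ 2 := by
  simp only [frobNorm, EuclideanSpace.norm_sq_eq, Real.norm_eq_abs, sq_abs]
  rw [Real.sq_sqrt (by positivity), Finset.sum_comm]

lemma frobNorm_mul_le_l2_opNorm_mul (A : Matrix (Fin m) (Fin n) ℝ)
    (B : Matrix (Fin n) (Fin k) ℝ) : frobNorm (A * B) ≤ ‖A‖ * frobNorm B := by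
  refine (pow_le_pow_iff_left₀ (frobNorm_nonneg _)
    (mul_nonneg (norm_nonneg _) (frobNorm_nonneg B)) two_ne_zero).mp ?_
  rw [mul_pow, frobNorm_sq_eq_sum_col, frobNorm_sq_eq_sum_col, Finset.mul_sum]
  refine Finset.sum_le_sum fun j _ => ?_
  rw [← mul_pow]
  have h := l2_opNorm_mulVec A (WithLp.toLp 2 fun i => B i j)
  have hc : (WithLp.toLp 2 fun i => (A * B) i j : EuclideanSpace ℝ (Fin m)) =
      (EuclideanSpace.equiv (Fin m) ℝ).symm (A *ᵥ fun i => B i j) := by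
    ext i; simp [Matrix.mul_apply, Matrix.mulVec, dotProduct]
  rw [hc]
  exact pow_le_pow_left₀ (norm_nonneg _) h 2

lemma l2_opNorm_le_frobNorm (A : Matrix (Fin m) (Fin n) ℝ) : ‖A‖ ≤ frobNorm A := by
  rw [l2_opNorm_def]
  refine ContinuousLinearMap.opNorm_le_bound _ (frobNorm_nonneg A) fun x => ?_
  refine (pow_le_pow_iff_left₀ (norm_nonneg _) (mul_nonneg (frobNorm_nonneg A) (norm_nonneg _))
    two_ne_zero).mp ?_
  simp only [LinearEquiv.trans_apply, LinearMap.coe_toContinuousLinearMap', toLpLin_apply,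
    EuclideanSpace.norm_sq_eq, mul_pow, frobNorm, Real.norm_eq_abs, sq_abs]
  rw [Real.sq_sqrt (by positivity), Finset.sum_mul]
  refine Finset.sum_le_sum fun i _ => ?_
  simpa [Matrix.mulVec, dotProduct] using Finset.sum_mul_sq_le_sq_mul_sq Finset.univ (A i) x

lemma frobNorm_mul_le_mul_l2_opNorm (A : Matrix (Fin m) (Fin n) ℝ)
    (B : Matrix (Fin n) (Fin k) ℝ) : frobNorm (A * B) ≤ frobNorm A * ‖B‖ := by
  rw [← frobNorm_transpose, transpose_mul, ← frobNorm_transpose A, ← l2_opNorm_transpose B,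
    mul_comm]
  exact frobNorm_mul_le_l2_opNorm_mul _ _

lemma l2_opNorm_mul_diagonal_sqrt_le {U : Matrix (Fin n) (Fin r) ℝ} (hU : Uᵀ * U = 1)
    {d : Fin r → ℝ} {σ : ℝ} (hd : ∀ i, 0 ≤ d i) (hdσ : ∀ i, d i ≤ σ) (hσ : 0 ≤ σ) :
    ‖U * diagonal (fun i => √(d i))‖ ≤ √σ := by
  have hgram : (U * diagonal (fun i => √(d i)))ᴴ * (U * diagonal (fun i => √(d i))) =
      diagonal d := by
    rw [conjTranspose_eq_transpose_of_trivial, transpose_mul, diagonal_transpose,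
      Matrix.mul_assoc, ← Matrix.mul_assoc Uᵀ, hU, Matrix.one_mul, diagonal_mul_diagonal]
    congr 1
    ext i
    exact Real.mul_self_sqrt (hd i)
  refine Real.le_sqrt_of_sq_le ?_
  rw [sq, ← l2_opNorm_conjTranspose_mul_self, hgram, l2_opNorm_diagonal]
  refine (pi_norm_le_iff_of_nonneg hσ).mpr fun i => ?_
  rw [Real.norm_of_nonneg (hd i)]
  exact hdσ i

lemma matInner_mul_mul_ge (E : Matrix (Fin m) (Fin r) ℝ) (D : Matrix (Fin m) (Fin n) ℝ)
    (Y : Matrix (Fin n) (Fin r) ℝ) (Λ : Matrix (Fin r) (Fin r) ℝ) :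
    matInner (E * Yᵀ) D - ‖Y‖ * ‖Λ - 1‖ * (frobNorm E * frobNorm D) ≤
      matInner E (D * (Y * Λ)) := by
  have hsplit : matInner E (D * (Y * Λ)) =
      matInner (E * Yᵀ) D + matInner (E * (Λ - 1)ᵀ) (D * Y) := by
    rw [← Matrix.mul_assoc, matInner_mul_right E (D * Y) Λ,
      show Λᵀ = 1 + (Λ - 1)ᵀ by simp, Matrix.mul_add, Matrix.mul_one, matInner_add_left,
      matInner_mul_right E D Y]
  have hrem : |matInner (E * (Λ - 1)ᵀ) (D * Y)| ≤ ‖Y‖ * ‖Λ - 1‖ * (frobNorm E * frobNorm D) :=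
    calc |matInner (E * (Λ - 1)ᵀ) (D * Y)|
        _ ≤ frobNorm (E * (Λ - 1)ᵀ) * frobNorm (D * Y) := abs_matInner_le _ _
        _ ≤ (frobNorm E * ‖Λ - 1‖) * (frobNorm D * ‖Y‖) := by
          rw [← l2_opNorm_transpose (Λ - 1)]
          exact mul_le_mul (frobNorm_mul_le_mul_l2_opNorm _ _) (frobNorm_mul_le_mul_l2_opNorm _ _)
            (frobNorm_nonneg _) (mul_nonneg (frobNorm_nonneg _) (norm_nonneg _))
        _ = ‖Y‖ * ‖Λ - 1‖ * (frobNorm E * frobNorm D) := by ring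
  rw [hsplit]
  linarith [neg_abs_le (matInner (E * (Λ - 1)ᵀ) (D * Y))]

lemma l2_opNorm_mul_l2_opNorm_sub_one_le {Yt Ys : Matrix (Fin n) (Fin r) ℝ}
    {Λ : Matrix (Fin r) (Fin r) ℝ} {σmin σmax : ℝ} (hmin : 0 < σmin) (hle : σmin ≤ σmax)
    (hYs : ‖Ys‖ ≤ √σmax) (hE : frobNorm (Yt - Ys) ≤ √σmin / 100)
    (hΛ : ‖Λ - 1‖ ≤ 1 / (180 * √(σmax / σmin))) :
    ‖Yt‖ * ‖Λ - 1‖ ≤ √σmin / 170 := by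
  have hsmin : 0 < √σmin := Real.sqrt_pos.mpr hmin
  have hsle : √σmin ≤ √σmax := Real.sqrt_le_sqrt hle
  have hYt : ‖Yt‖ ≤ 101 / 100 * √σmax :=
    calc ‖Yt‖ = ‖Ys + (Yt - Ys)‖ := by rw [add_sub_cancel]
      _ ≤ √σmax + √σmin / 100 :=
        (norm_add_le _ _).trans (add_le_add hYs ((l2_opNorm_le_frobNorm _).trans hE))
      _ ≤ 101 / 100 * √σmax := by linarith
  have hsmax : 0 < √σmax := hsmin.trans_le hsle
  have hΛ' : ‖Λ - 1‖ ≤ √σmin / (180 * √σmax) := by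
    rw [Real.sqrt_div' _ hmin.le] at hΛ
    convert hΛ using 1
    field_simp
  calc ‖Yt‖ * ‖Λ - 1‖ ≤ 101 / 100 * √σmax * (√σmin / (180 * √σmax)) :=
        mul_le_mul hYt hΛ' (norm_nonneg _) (by positivity)
    _ = 101 / 18000 * √σmin := by field_simp; ring
    _ ≤ √σmin / 170 := by linarith

theorem gamma_ge_of_transpose_mul_eq {Xt Xs : Matrix (Fin n₁) (Fin r) ℝ}
    {Yt Ys : Matrix (Fin n₂) (Fin r) ℝ} {Λ Γ : Matrix (Fin r) (Fin r) ℝ} {σ : ℝ} (hσ : 0 ≤ σ)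
    (hbal : Xtᵀ * (Xt - Xs) = (Yt - Ys)ᵀ * Yt)
    (hex : frobNorm (Xt - Xs) ≤ √σ / 100) (hey : frobNorm (Yt - Ys) ≤ √σ / 100)
    (hΛ : ‖Yt‖ * ‖Λ - 1‖ ≤ √σ / 170) (hΓ : ‖Xt‖ * ‖Γ - 1‖ ≤ √σ / 170) :
    3 / 4 * (frobNorm (Yt * (Xt - Xs)ᵀ) ^ 2 + frobNorm (Xt * (Yt - Ys)ᵀ) ^ 2) -
        σ / 7 * (frobNorm (Xt - Xs) ^ 2 + frobNorm (Yt - Ys) ^ 2) ≤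
      matInner (Xt - Xs) ((Xt * Ytᵀ - Xs * Ysᵀ) * (Yt * Λ)) +
        matInner (Yt - Ys) ((Xt * Ytᵀ - Xs * Ysᵀ)ᵀ * (Xt * Γ)) := by
  set Ex := Xt - Xs
  set Ey := Yt - Ys
  set Δ := Xt * Ytᵀ - Xs * Ysᵀ
  have hΔ : Δ = Ex * Ytᵀ + Xt * Eyᵀ - Ex * Eyᵀ := by
    simp only [Δ, Ex, Ey, transpose_sub, Matrix.sub_mul, Matrix.mul_sub]
    abel
  have hΔt : matInner (Ey * Xtᵀ) Δᵀ = matInner (Xt * Eyᵀ) Δ := by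
    rw [← matInner_transpose, transpose_mul, transpose_transpose, transpose_transpose]
  have ha : frobNorm (Yt * Exᵀ) = frobNorm (Ex * Ytᵀ) := by
    rw [← frobNorm_transpose, transpose_mul, transpose_transpose]
  have hN : frobNorm (Ex * Eyᵀ) ≤ frobNorm Ex * frobNorm Ey :=
    (frobNorm_mul_le_mul_l2_opNorm _ _).trans <| by
      rw [l2_opNorm_transpose]
      exact mul_le_mul_of_nonneg_left (l2_opNorm_le_frobNorm Ey) (frobNorm_nonneg Ex)
  have hdF : frobNorm Δ ≤ frobNorm (Ex * Ytᵀ) + frobNorm (Xt * Eyᵀ) + frobNorm (Ex * Eyᵀ) := by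
    rw [hΔ]
    exact (frobNorm_sub_le _ _).trans (by gcongr; exact frobNorm_add_le _ _)
  have hmain := matInner_add_sub_ge (Ex * Ytᵀ) (Xt * Eyᵀ) (Ex * Eyᵀ)
    (matInner_mul_transpose_nonneg hbal)
  have h₁ := matInner_mul_mul_ge Ex Δ Yt Λ
  have h₂ := matInner_mul_mul_ge Ey Δᵀ Xt Γ
  have hrem : ‖Yt‖ * ‖Λ - 1‖ * (frobNorm Ex * frobNorm Δ) +
      ‖Xt‖ * ‖Γ - 1‖ * (frobNorm Ey * frobNorm Δᵀ) ≤
        √σ / 170 * (frobNorm Ex + frobNorm Ey) * frobNorm Δ := by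
    rw [frobNorm_transpose]
    have := mul_le_mul_of_nonneg_right hΛ (mul_nonneg (frobNorm_nonneg Ex) (frobNorm_nonneg Δ))
    have := mul_le_mul_of_nonneg_right hΓ (mul_nonneg (frobNorm_nonneg Ey) (frobNorm_nonneg Δ))
    linarith
  have := gamma_scalar_bound (frobNorm_nonneg (Ex * Ytᵀ)) (frobNorm_nonneg (Xt * Eyᵀ))
    (frobNorm_nonneg Ex) (frobNorm_nonneg Ey) hex hey hN hdF
  rw [Real.sq_sqrt hσ] at this
  rw [← hΔ, matInner_add_left] at hmain
  rw [ha]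
  linarith

end OperatorNorm

/-- lower bound on `γ₁ + γ₂`: there is an absolute constant
`c₀ > 0` such that if `Z̃ = [X̃; Ỹ]` is aligned with `Z⋆`, the error is at most
`c₀²σ_min/κ³` in squared Frobenius norm, and `Λ` is invertible and close to the
identity, then
`⟨Ẽ_x, (X̃Ỹᵀ−M⋆)ỸΛ⟩ + ⟨Ẽ_y, (X̃Ỹᵀ−M⋆)ᵀX̃Λ⁻¹⟩ ≥ ¾(‖ỸẼ_xᵀ‖_F² + ‖X̃Ẽ_yᵀ‖_F²) − (σ_min/7)(‖Ẽ_x‖_F² + ‖Ẽ_y‖_F²)`. -/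
theorem gamma_lower_bound :
    ∃ c₀ : ℝ, 0 < c₀ ∧
      ∀ (n₁ n₂ r : ℕ)
        (Ustar : Matrix (Fin n₁) (Fin r) ℝ) (Vstar : Matrix (Fin n₂) (Fin r) ℝ)
        (d : Fin r → ℝ), (∀ i, 0 < d i) →
        Ustarᵀ * Ustar = 1 → Vstarᵀ * Vstar = 1 →
        ∀ (Mstar : Matrix (Fin n₁) (Fin n₂) ℝ),
          Mstar = Ustar * Matrix.diagonal d * Vstarᵀ →
        ∀ (Xstar : Matrix (Fin n₁) (Fin r) ℝ) (Ystar : Matrix (Fin n₂) (Fin r) ℝ),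
          Xstar = Ustar * Matrix.diagonal (fun i => Real.sqrt (d i)) →
          Ystar = Vstar * Matrix.diagonal (fun i => Real.sqrt (d i)) →
        ∀ (σmax σmin : ℝ),
          IsGreatest (Set.range d) σmax → IsLeast (Set.range d) σmin →
        ∀ (Xt : Matrix (Fin n₁) (Fin r) ℝ) (Yt : Matrix (Fin n₂) (Fin r) ℝ),
          -- Z̃ is aligned with Z⋆
          (∀ P : Matrix (Fin r) (Fin r) ℝ, IsUnit P →
            (frobNorm (Xt - Xstar)) ^ 2 + (frobNorm (Yt - Ystar)) ^ 2 ≤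
              (frobNorm (Xt * P - Xstar)) ^ 2 + (frobNorm (Yt * (P⁻¹)ᵀ - Ystar)) ^ 2) →
          -- small aligned error
          (frobNorm (Xt - Xstar)) ^ 2 + (frobNorm (Yt - Ystar)) ^ 2 ≤
            c₀ ^ 2 * σmin / (σmax / σmin) ^ 3 →
        ∀ (Λ : Matrix (Fin r) (Fin r) ℝ), IsUnit Λ →
          specNorm (Λ - 1) ≤ 1 / (180 * Real.sqrt (σmax / σmin)) →
          specNorm (Λ⁻¹ - 1) ≤ 1 / (180 * Real.sqrt (σmax / σmin)) →
          matInner (Xt - Xstar) ((Xt * Ytᵀ - Mstar) * (Yt * Λ)) +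
              matInner (Yt - Ystar) ((Xt * Ytᵀ - Mstar)ᵀ * (Xt * Λ⁻¹)) ≥
            (3 / 4) * ((frobNorm (Yt * (Xt - Xstar)ᵀ)) ^ 2 +
                (frobNorm (Xt * (Yt - Ystar)ᵀ)) ^ 2) -
              (σmin / 7) * ((frobNorm (Xt - Xstar)) ^ 2 + (frobNorm (Yt - Ystar)) ^ 2) := by
  refine ⟨1 / 100, by norm_num, ?_⟩
  intro n₁ n₂ r U V d hd hU hV Mstar hM Xstar Ystar hX hY σmax σmin hmax hmin Xt Yt halign heps
    Λ _ hΛ hΛinv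
  obtain ⟨i₀, hi₀⟩ := hmin.1
  have hσmin : 0 < σmin := hi₀ ▸ hd i₀
  have hle : σmin ≤ σmax := hmax.2 hmin.1
  have hdσ : ∀ i, d i ≤ σmax := fun i => hmax.2 ⟨i, rfl⟩
  have hsmall : frobNorm (Xt - Xstar) ^ 2 + frobNorm (Yt - Ystar) ^ 2 ≤ (√σmin / 100) ^ 2 := by
    refine heps.trans ?_
    rw [show (√σmin / 100) ^ 2 = (1 / 100) ^ 2 * σmin by rw [div_pow, Real.sq_sqrt hσmin.le]; ring]
    exact div_le_self (by positivity) (one_le_pow₀ ((one_le_div hσmin).mpr hle))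
  have hex := le_of_sq_add_sq_le (frobNorm_nonneg _) (by positivity) hsmall
  have hey :=
    le_of_sq_add_sq_le (frobNorm_nonneg _) (by positivity) ((add_comm _ _).trans_le hsmall)
  have hXs : specNorm Xstar ≤ √σmax :=
    hX ▸ l2_opNorm_mul_diagonal_sqrt_le hU (fun i => (hd i).le) hdσ (hσmin.le.trans hle)
  have hYs : specNorm Ystar ≤ √σmax :=
    hY ▸ l2_opNorm_mul_diagonal_sqrt_le hV (fun i => (hd i).le) hdσ (hσmin.le.trans hle)
  rw [hM, mul_diagonal_mul_transpose_eq U V (fun i => (hd i).le), ← hX, ← hY]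
  exact gamma_ge_of_transpose_mul_eq hσmin.le (IsAligned.transpose_mul_sub_eq halign) hex hey
    (l2_opNorm_mul_l2_opNorm_sub_one_le hσmin hle hYs hey hΛ)
    (l2_opNorm_mul_l2_opNorm_sub_one_le hσmin hle hXs hex hΛinv)
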